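/- arXiv:1707.02678 — 2 statements merged into one kernel-verified Lean document; each statement's English description precedes it below -/
import Mathlib

section
/- Let (A, B) be a complete hereditary cotorsion pair in Mod R. The class G(B) of Gorenstein B-modules is closed under arbitrary direct products. -/
open CategoryTheory

universe u

variable {R : Type u} [Ring R]

/-- `Ext^i(X, M)` is trivial. -/
def ExtVanishes (R : Type u) [Ring R] (i : ℕ) (X M : ModuleCat.{u} R) : Prop :=
  Subsingleton (((Ext ℤ (ModuleCat.{u} R) i).obj (Opposite.op X)).obj M)

/-- `0 → X → Y → Z → 0` is a short exact sequence of `R`-modules. -/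
def IsShortExact {X Y Z : ModuleCat.{u} R} (f : X →ₗ[R] Y) (g : Y →ₗ[R] Z) : Prop :=
  Function.Injective f ∧ Function.Surjective g ∧ Function.Exact f g

lemma subsingleton_iff_isZero {S : Type*} [Ring S] (M : ModuleCat S) :
    Subsingleton M ↔ Limits.IsZero M := by
  constructor
  · intro h; exact ModuleCat.isZero_of_subsingleton _
  · intro h
    have h0 : (𝟙 M : M ⟶ M) = 0 := Limits.IsZero.eq_of_src h _ _
    exact ⟨fun a b => by
      have ha : a = (𝟙 M : M ⟶ M) a := rfl
      have hb : b = (𝟙 M : M ⟶ M) b := rfl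
      rw [ha, hb, h0]; rfl⟩

lemma subsingleton_of_iso {S : Type*} [Ring S] {A B : ModuleCat S} (e : A ≅ B)
    (h : Subsingleton A) : Subsingleton B :=
  ⟨fun a b => by
    have key : ∀ x : B, x = e.hom (e.inv x) := fun x => by
      change x = (e.inv ≫ e.hom) x; rw [e.inv_hom_id]; rfl
    rw [key a, key b, Subsingleton.elim (e.inv a) (e.inv b)]⟩

lemma extVanishes_iff_exactAt (L N : ModuleCat.{u} R) (P : ProjectiveResolution L) (i : ℕ) :
    ExtVanishes R i L N ↔ (P.complex.linearYonedaObj ℤ N).ExactAt i := by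
  rw [HomologicalComplex.exactAt_iff_isZero_homology, ← subsingleton_iff_isZero]
  exact ⟨fun h => subsingleton_of_iso (P.isoExt (R := ℤ) i N) h,
    fun h => subsingleton_of_iso (P.isoExt (R := ℤ) i N).symm h⟩

lemma extVanishes_succ_iff (L N : ModuleCat.{u} R) (P : ProjectiveResolution L) (n : ℕ) :
    ExtVanishes R (n + 1) L N ↔
      ∀ φ : P.complex.X (n + 1) ⟶ N, P.complex.d (n + 2) (n + 1) ≫ φ = 0 →
        ∃ ψ : P.complex.X n ⟶ N, P.complex.d (n + 1) n ≫ ψ = φ := by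
  rw [extVanishes_iff_exactAt L N P,
    HomologicalComplex.exactAt_iff' _ n (n + 1) (n + 2) (by simp) (by simp),
    ShortComplex.moduleCat_exact_iff]
  constructor
  · intro h φ hφ
    obtain ⟨ψ, hψ⟩ := h φ hφ
    exact ⟨ψ, hψ⟩
  · intro h φ hφ
    obtain ⟨ψ, hψ⟩ := h φ hφ
    exact ⟨ψ, hψ⟩

lemma factor_inj {Q K A : ModuleCat.{u} R} (f : K →ₗ[R] A) (hf : Function.Injective f)
    (u : Q ⟶ A) (hu : ∀ x, u x ∈ LinearMap.range f) : ∃ v : Q ⟶ K, v ≫ (ModuleCat.ofHom f) = u := by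
  let e := LinearEquiv.ofInjective f hf
  have key : ∀ y : LinearMap.range f, f (e.symm y) = y := fun y => by
    have h1 := e.apply_symm_apply y
    have h2 : ((e (e.symm y) : LinearMap.range f) : A) = f (e.symm y) := rfl
    rw [← h2, h1]
  refine ⟨ModuleCat.ofHom <| (e.symm.toLinearMap).comp (LinearMap.codRestrict (LinearMap.range f) u.hom hu), ?_⟩
  ext x
  exact key ⟨u x, hu x⟩

lemma factor_surj {A N W : ModuleCat.{u} R} (g : A →ₗ[R] N) (hg : Function.Surjective g)
    (h : A ⟶ W) (hker : ∀ a, g a = 0 → h a = 0) :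
    ∃ w : N ⟶ W, (ModuleCat.ofHom g) ≫ w = h := by
  have hle : LinearMap.ker g ≤ LinearMap.ker h.hom := fun a ha => hker a ha
  let e := LinearMap.quotKerEquivOfSurjective g hg
  have emk : ∀ a : A, e (Submodule.Quotient.mk a) = g a := fun a => rfl
  refine ⟨ModuleCat.ofHom <| (Submodule.liftQ (LinearMap.ker g) h.hom hle).comp e.symm.toLinearMap, ?_⟩
  ext a
  have : e.symm (g a) = Submodule.Quotient.mk a := by
    apply e.injective
    rw [e.apply_symm_apply, emk]
  change Submodule.liftQ _ h.hom hle (e.symm (g a)) = h a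
  rw [this]
  rfl

lemma lift_proj {Q A N : ModuleCat.{u} R} [Projective Q] (g : A →ₗ[R] N)
    (hg : Function.Surjective g) (h : Q ⟶ N) : ∃ h' : Q ⟶ A, h' ≫ (ModuleCat.ofHom g) = h := by
  have : Epi (ModuleCat.ofHom g) := (ModuleCat.epi_iff_surjective (ModuleCat.ofHom g)).2 hg
  exact ⟨Projective.factorThru h (ModuleCat.ofHom g), Projective.factorThru_comp h (ModuleCat.ofHom g)⟩

lemma res_surj (L : ModuleCat.{u} R) (P : ProjectiveResolution L) :
    Function.Surjective (P.π.f 0) := by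
  rw [← ModuleCat.epi_iff_surjective]
  exact Limits.epi_of_isColimit_cofork P.isColimitCokernelCofork

lemma res_exact0 (L : ModuleCat.{u} R) (P : ProjectiveResolution L) :
    ∀ x : P.complex.X 0, P.π.f 0 x = 0 → ∃ y, P.complex.d 1 0 y = x := by
  have := P.exact₀
  rw [ShortComplex.moduleCat_exact_iff] at this
  exact this

/-- E1: if `Ext¹(L, K) = 0` then maps `L → N` lift along `g : A ↠ N` with kernel `K`. -/
lemma hom_lift_of_ext1 {K A N : ModuleCat.{u} R} {f : K →ₗ[R] A} {g : A →ₗ[R] N}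
    (hse : IsShortExact f g) (L : ModuleCat.{u} R) (h1 : ExtVanishes R 1 L K)
    (φ : L ⟶ N) : ∃ ψ : L ⟶ A, ψ ≫ (ModuleCat.ofHom g) = φ := by
  obtain ⟨hf, hg, hex⟩ := hse
  set P := ProjectiveResolution.of L with hP
  set ε0 := P.π.f 0
  -- lift ε0 ≫ φ through g
  obtain ⟨α, hα⟩ := lift_proj g hg (ε0 ≫ φ)
  -- d1 ≫ α lands in the image of f
  obtain ⟨β, hβ⟩ := factor_inj f hf (P.complex.d 1 0 ≫ α) (fun x => by
    have hgoal : g ((P.complex.d 1 0 ≫ α) x) = 0 := by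
      have h0 : ε0 (P.complex.d 1 0 x) = 0 := by
        have := P.complex_d_comp_π_f_zero
        exact congrArg (fun (m : P.complex.X 1 ⟶ L) => m x) this
      have : g (α (P.complex.d 1 0 x)) = φ (ε0 (P.complex.d 1 0 x)) :=
        congrArg (fun (m : P.complex.X 0 ⟶ N) => m (P.complex.d 1 0 x)) hα
      exact this.trans ((congrArg φ.hom h0).trans (map_zero φ.hom))
    obtain ⟨k, hk⟩ := (hex _).mp hgoal
    exact ⟨k, hk⟩)
  -- β is a cocycle
  have hβc : P.complex.d 2 1 ≫ β = 0 := by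
    have : (P.complex.d 2 1 ≫ β) ≫ (ModuleCat.ofHom f) = 0 := by
      rw [Category.assoc, hβ, ← Category.assoc, P.complex.d_comp_d 2 1 0]
      simp
    ext x
    have h5 := congrArg (fun (m : P.complex.X 2 ⟶ A) => m x) this
    have h6 : f (β (P.complex.d 2 1 x)) = 0 := h5
    have h7 : β (P.complex.d 2 1 x) = 0 := by
      apply hf; rw [h6, map_zero]
    exact h7
  -- use Ext¹(L,K)=0
  obtain ⟨γ, hγ⟩ := (extVanishes_succ_iff L K P 0).1 h1 β hβc
  -- α - γf kills ker ε0
  obtain ⟨ψ, hψ⟩ := factor_surj ε0.hom (res_surj L P) (α - γ ≫ (ModuleCat.ofHom f)) (fun a ha => by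
    obtain ⟨y, hy⟩ := res_exact0 L P a ha
    have h1' : α a - f (γ a) = α (P.complex.d 1 0 y) - f (γ (P.complex.d 1 0 y)) := by rw [hy]
    have h2' : f (γ (P.complex.d 1 0 y)) = f (β y) :=
      congrArg (fun (m : P.complex.X 1 ⟶ K) => f (m y)) hγ
    have h3' : f (β y) = α (P.complex.d 1 0 y) :=
      congrArg (fun (m : P.complex.X 1 ⟶ A) => m y) hβ
    show α a - f (γ a) = 0
    rw [h1', h2', h3', sub_self])
  refine ⟨ψ, ?_⟩
  -- cancel the surjection ε0
  ext x
  obtain ⟨a, rfl⟩ := res_surj L P x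
  have hψa : ψ (ε0 a) = α a - f (γ a) :=
    congrArg (fun (m : P.complex.X 0 ⟶ A) => m a) hψ
  have : g (ψ (ε0 a)) = g (α a) - g (f (γ a)) := by rw [hψa]; simp
  have hgf : g (f (γ a)) = 0 := hex.apply_apply_eq_zero (γ a)
  have hga : g (α a) = φ (ε0 a) :=
    congrArg (fun (m : P.complex.X 0 ⟶ N) => m a) hα
  show g (ψ (ε0 a)) = φ (ε0 a)
  rw [this, hgf, hga, sub_zero]

lemma comp_eq_zero {K A N : ModuleCat.{u} R} (f : K ⟶ A) (g : A ⟶ N)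
    (hex : Function.Exact f g) : f ≫ g = 0 := by
  ext x; exact hex.apply_apply_eq_zero x

/-- E2a: middle term of a s.e.s. inherits Ext-vanishing from the two ends. -/
lemma ext_mid {K A N : ModuleCat.{u} R} {f : K →ₗ[R] A} {g : A →ₗ[R] N}
    (hse : IsShortExact f g) (L : ModuleCat.{u} R) (n : ℕ)
    (hK : ExtVanishes R (n + 1) L K) (hN : ExtVanishes R (n + 1) L N) :
    ExtVanishes R (n + 1) L A := by
  obtain ⟨hf, hg, hex⟩ := hse
  set P := ProjectiveResolution.of L
  rw [extVanishes_succ_iff L A P]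
  intro φ hφ
  have hc : P.complex.d (n + 2) (n + 1) ≫ (φ ≫ (ModuleCat.ofHom g)) = 0 := by
    rw [← Category.assoc, hφ, Limits.zero_comp]
  obtain ⟨ψN, hψN⟩ := (extVanishes_succ_iff L N P n).1 hN (φ ≫ (ModuleCat.ofHom g)) hc
  obtain ⟨ρ, hρ⟩ := lift_proj g hg ψN
  obtain ⟨β, hβ⟩ := factor_inj f hf (φ - P.complex.d (n + 1) n ≫ ρ) (fun x => by
    have key : g ((φ - P.complex.d (n + 1) n ≫ ρ) x) = 0 := by
      have e1 : g (φ x) = ψN (P.complex.d (n + 1) n x) := by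
        have := congrArg (fun (m : P.complex.X (n + 1) ⟶ N) => m x) hψN
        exact this.symm
      have e2 : g (ρ (P.complex.d (n + 1) n x)) = ψN (P.complex.d (n + 1) n x) :=
        congrArg (fun (m : P.complex.X n ⟶ N) => m (P.complex.d (n + 1) n x)) hρ
      have : g ((φ - P.complex.d (n + 1) n ≫ ρ) x)
          = g (φ x) - g (ρ (P.complex.d (n + 1) n x)) := map_sub g _ _
      rw [this, e1, e2, sub_self]
    obtain ⟨k, hk⟩ := (hex _).mp key
    exact ⟨k, hk⟩)
  have hβc : P.complex.d (n + 2) (n + 1) ≫ β = 0 := by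
    have h0 : (P.complex.d (n + 2) (n + 1) ≫ β) ≫ (ModuleCat.ofHom f) = 0 := by
      rw [Category.assoc, hβ, Preadditive.comp_sub, hφ, ← Category.assoc,
        P.complex.d_comp_d, Limits.zero_comp, sub_zero]
    ext x
    have h5 : f (β (P.complex.d (n + 2) (n + 1) x)) = 0 :=
      congrArg (fun (m : P.complex.X (n + 2) ⟶ A) => m x) h0
    have h7 : β (P.complex.d (n + 2) (n + 1) x) = 0 := by
      apply hf; rw [h5, map_zero]
    exact h7
  obtain ⟨γ, hγ⟩ := (extVanishes_succ_iff L K P n).1 hK β hβc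
  refine ⟨ρ + γ ≫ (ModuleCat.ofHom f), ?_⟩
  rw [Preadditive.comp_add, ← Category.assoc, hγ, hβ]
  abel

/-- E2b: right term of a s.e.s. inherits Ext-vanishing. -/
lemma ext_right {K A N : ModuleCat.{u} R} {f : K →ₗ[R] A} {g : A →ₗ[R] N}
    (hse : IsShortExact f g) (L : ModuleCat.{u} R) (n : ℕ)
    (hA : ExtVanishes R (n + 1) L A) (hK : ExtVanishes R (n + 2) L K) :
    ExtVanishes R (n + 1) L N := by
  obtain ⟨hf, hg, hex⟩ := hse
  set P := ProjectiveResolution.of L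
  rw [extVanishes_succ_iff L N P]
  intro φ hφ
  obtain ⟨α, hα⟩ := lift_proj g hg φ
  obtain ⟨β, hβ⟩ := factor_inj f hf (P.complex.d (n + 2) (n + 1) ≫ α) (fun x => by
    have key : g ((P.complex.d (n + 2) (n + 1) ≫ α) x) = 0 := by
      have e1 : g (α (P.complex.d (n + 2) (n + 1) x)) = φ (P.complex.d (n + 2) (n + 1) x) :=
        congrArg (fun (m : P.complex.X (n + 1) ⟶ N) => m (P.complex.d (n + 2) (n + 1) x)) hα
      have e2 : φ (P.complex.d (n + 2) (n + 1) x) = 0 :=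
        congrArg (fun (m : P.complex.X (n + 2) ⟶ N) => m x) hφ
      exact e1.trans e2
    obtain ⟨k, hk⟩ := (hex _).mp key
    exact ⟨k, hk⟩)
  have hβc : P.complex.d (n + 3) (n + 2) ≫ β = 0 := by
    have h0 : (P.complex.d (n + 3) (n + 2) ≫ β) ≫ (ModuleCat.ofHom f) = 0 := by
      rw [Category.assoc, hβ, ← Category.assoc, P.complex.d_comp_d, Limits.zero_comp]
    ext x
    have h5 : f (β (P.complex.d (n + 3) (n + 2) x)) = 0 :=
      congrArg (fun (m : P.complex.X (n + 3) ⟶ A) => m x) h0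
    have h7 : β (P.complex.d (n + 3) (n + 2) x) = 0 := by
      apply hf; rw [h5, map_zero]
    exact h7
  obtain ⟨γ, hγ⟩ := (extVanishes_succ_iff L K P (n + 1)).1 hK β hβc
  have hα' : P.complex.d (n + 2) (n + 1) ≫ (α - γ ≫ (ModuleCat.ofHom f)) = 0 := by
    rw [Preadditive.comp_sub, ← Category.assoc, hγ, hβ, sub_self]
  obtain ⟨ρ, hρ⟩ := (extVanishes_succ_iff L A P n).1 hA (α - γ ≫ (ModuleCat.ofHom f)) hα'
  refine ⟨ρ ≫ (ModuleCat.ofHom g), ?_⟩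
  rw [← Category.assoc, hρ, Preadditive.sub_comp, Category.assoc,
    comp_eq_zero (ModuleCat.ofHom f) (ModuleCat.ofHom g) hex, Limits.comp_zero, sub_zero, hα]

/-- E2c: kernel inherits Ext¹-vanishing given lifting of Hom. -/
lemma ext_ker_one {K A N : ModuleCat.{u} R} {f : K →ₗ[R] A} {g : A →ₗ[R] N}
    (hse : IsShortExact f g) (L : ModuleCat.{u} R)
    (hA : ExtVanishes R 1 L A)
    (hlift : ∀ w : L ⟶ N, ∃ ψ : L ⟶ A, ψ ≫ (ModuleCat.ofHom g) = w) :
    ExtVanishes R 1 L K := by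
  obtain ⟨hf, hg, hex⟩ := hse
  set P := ProjectiveResolution.of L
  rw [extVanishes_succ_iff L K P]
  intro β hβc
  have hc : P.complex.d 2 1 ≫ (β ≫ (ModuleCat.ofHom f)) = 0 := by
    rw [← Category.assoc, hβc, Limits.zero_comp]
  obtain ⟨α, hα⟩ := (extVanishes_succ_iff L A P 0).1 hA (β ≫ (ModuleCat.ofHom f)) hc
  -- α ≫ g kills ker ε0, so factors through L
  obtain ⟨w, hw⟩ := factor_surj (P.π.f 0).hom (res_surj L P) (α ≫ (ModuleCat.ofHom g)) (fun a ha => by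
    obtain ⟨y, hy⟩ := res_exact0 L P a ha
    have e1 : α a = α (P.complex.d 1 0 y) := by rw [hy]
    have e2 : α (P.complex.d 1 0 y) = f (β y) :=
      congrArg (fun (m : P.complex.X 1 ⟶ A) => m y) hα
    show g (α a) = 0
    rw [e1, e2]
    exact hex.apply_apply_eq_zero (β y))
  obtain ⟨ψ, hψ⟩ := hlift w
  obtain ⟨γ, hγ⟩ := factor_inj f hf (α - P.π.f 0 ≫ ψ) (fun a => by
    have key : g ((α - P.π.f 0 ≫ ψ) a) = 0 := by
      have e1 : g (ψ (P.π.f 0 a)) = w (P.π.f 0 a) :=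
        congrArg (fun (m : L ⟶ N) => m (P.π.f 0 a)) hψ
      have e2 : g (α a) = w (P.π.f 0 a) :=
        (congrArg (fun (m : P.complex.X 0 ⟶ N) => m a) hw).symm
      have : g ((α - P.π.f 0 ≫ ψ) a) = g (α a) - g (ψ (P.π.f 0 a)) := map_sub g _ _
      rw [this, e1, e2, sub_self]
    obtain ⟨k, hk⟩ := (hex _).mp key
    exact ⟨k, hk⟩)
  refine ⟨γ, ?_⟩
  have e3 : ∀ y, α (P.complex.d 1 0 y) = f (β y) := fun y =>
    congrArg (fun (m : P.complex.X 1 ⟶ A) => m y) hα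
  have e4 : ∀ y : P.complex.X 1, P.π.f 0 (P.complex.d 1 0 y) = 0 := fun y =>
    congrArg (fun (m : P.complex.X 1 ⟶ L) => m y) P.complex_d_comp_π_f_zero
  ext y
  apply hf
  have e5 : f (γ (P.complex.d 1 0 y))
      = α (P.complex.d 1 0 y) - ψ (P.π.f 0 (P.complex.d 1 0 y)) :=
    congrArg (fun (m : P.complex.X 0 ⟶ A) => m (P.complex.d 1 0 y)) hγ
  show f (γ (P.complex.d 1 0 y)) = f (β y)
  have e6 : ψ (P.π.f 0 (P.complex.d 1 0 y)) = 0 :=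
    (congrArg ψ.hom (e4 y)).trans (map_zero ψ.hom)
  rw [e5, e6, sub_zero, e3 y]

/-- E2d: kernel inherits higher Ext-vanishing. -/
lemma ext_ker_succ {K A N : ModuleCat.{u} R} {f : K →ₗ[R] A} {g : A →ₗ[R] N}
    (hse : IsShortExact f g) (L : ModuleCat.{u} R) (n : ℕ)
    (hA : ExtVanishes R (n + 2) L A) (hN : ExtVanishes R (n + 1) L N) :
    ExtVanishes R (n + 2) L K := by
  obtain ⟨hf, hg, hex⟩ := hse
  set P := ProjectiveResolution.of L
  rw [extVanishes_succ_iff L K P]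
  intro β hβc
  have hc : P.complex.d (n + 3) (n + 2) ≫ (β ≫ (ModuleCat.ofHom f)) = 0 := by
    rw [← Category.assoc, hβc, Limits.zero_comp]
  obtain ⟨α, hα⟩ := (extVanishes_succ_iff L A P (n + 1)).1 hA (β ≫ (ModuleCat.ofHom f)) hc
  have hcN : P.complex.d (n + 2) (n + 1) ≫ (α ≫ (ModuleCat.ofHom g)) = 0 := by
    rw [← Category.assoc, hα, Category.assoc, comp_eq_zero (ModuleCat.ofHom f) (ModuleCat.ofHom g) hex, Limits.comp_zero]
  obtain ⟨w, hw⟩ := (extVanishes_succ_iff L N P n).1 hN (α ≫ (ModuleCat.ofHom g)) hcN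
  obtain ⟨ρ, hρ⟩ := lift_proj g hg w
  obtain ⟨γ, hγ⟩ := factor_inj f hf (α - P.complex.d (n + 1) n ≫ ρ) (fun x => by
    have key : g ((α - P.complex.d (n + 1) n ≫ ρ) x) = 0 := by
      have e1 : g (ρ (P.complex.d (n + 1) n x)) = w (P.complex.d (n + 1) n x) :=
        congrArg (fun (m : P.complex.X n ⟶ N) => m (P.complex.d (n + 1) n x)) hρ
      have e2 : w (P.complex.d (n + 1) n x) = g (α x) :=
        congrArg (fun (m : P.complex.X (n + 1) ⟶ N) => m x) hw
      have : g ((α - P.complex.d (n + 1) n ≫ ρ) x) = g (α x) - g (ρ (P.complex.d (n + 1) n x)) := map_sub g _ _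
      rw [this, e1, e2, sub_self]
    obtain ⟨k, hk⟩ := (hex _).mp key
    exact ⟨k, hk⟩)
  refine ⟨γ, ?_⟩
  have h0 : (P.complex.d (n + 2) (n + 1) ≫ γ) ≫ (ModuleCat.ofHom f) = β ≫ (ModuleCat.ofHom f) := by
    rw [Category.assoc, hγ, Preadditive.comp_sub, hα, ← Category.assoc,
      P.complex.d_comp_d, Limits.zero_comp, sub_zero]
  ext x
  apply hf
  exact congrArg (fun (m : P.complex.X (n + 2) ⟶ A) => m x) h0

/-- Ext-vanishing is closed under products in the second variable. -/
lemma extVanishes_pi {ι : Type u} (M : ι → ModuleCat.{u} R) (L : ModuleCat.{u} R) (n : ℕ)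
    (h : ∀ j, ExtVanishes R (n + 1) L (M j)) :
    ExtVanishes R (n + 1) L (ModuleCat.of R (∀ j, M j)) := by
  set P := ProjectiveResolution.of L
  rw [extVanishes_succ_iff _ _ P]
  intro φ hφ
  have comp : ∀ j, ∃ ψj : P.complex.X n ⟶ M j,
      P.complex.d (n + 1) n ≫ ψj = φ ≫ (ModuleCat.ofHom (LinearMap.proj j : (∀ i, M i) →ₗ[R] M j) :
        ModuleCat.of R (∀ i, M i) ⟶ M j) := by
    intro j
    refine (extVanishes_succ_iff L (M j) P n).1 (h j) _ ?_
    rw [← Category.assoc, hφ, Limits.zero_comp]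
  choose ψ hψ using comp
  refine ⟨ModuleCat.ofHom (LinearMap.pi (fun j => (ψ j).hom)), ?_⟩
  ext x
  rename_i j
  exact congrArg (fun (m : P.complex.X (n + 1) ⟶ M j) => m x) (hψ j)


/-- The kernel s.e.s. of a surjection. -/
lemma ker_ses {A N : ModuleCat.{u} R} (p : A →ₗ[R] N) (hp : Function.Surjective p) :
    IsShortExact (X := ModuleCat.of R (LinearMap.ker p))
      ((LinearMap.ker p).subtype) p := by
  refine ⟨Submodule.injective_subtype _, hp, fun y => ?_⟩
  constructor
  · intro hy; exact ⟨⟨y, hy⟩, rfl⟩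
  · rintro ⟨⟨x, hx⟩, rfl⟩; exact hx

/-- Composite-kernel s.e.s.: from `0 → B' → A → B₀ → 0` and `0 → N₁ → B₀ → N → 0`,
the kernel of the composite `A → N` is an extension of `N₁` by `B'`. -/
lemma comp_ker_ses {B' A B0 N1 N : ModuleCat.{u} R} (f1 : B' →ₗ[R] A) (g1 : A →ₗ[R] B0)
    (i0 : N1 →ₗ[R] B0) (p0 : B0 →ₗ[R] N)
    (h1 : IsShortExact f1 g1) (h2 : IsShortExact i0 p0) :
    ∃ (u : B' →ₗ[R] ModuleCat.of R (LinearMap.ker (p0 ∘ₗ g1)))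
      (v : (ModuleCat.of R (LinearMap.ker (p0 ∘ₗ g1)) : ModuleCat.{u} R) →ₗ[R] N1),
      IsShortExact u v := by
  obtain ⟨hf1, hg1, hex1⟩ := h1
  obtain ⟨hi0, hp0, hex2⟩ := h2
  have humem : ∀ b : B', f1 b ∈ LinearMap.ker (p0 ∘ₗ g1) := by
    intro b
    have : g1 (f1 b) = 0 := hex1.apply_apply_eq_zero b
    show p0 (g1 (f1 b)) = 0
    rw [this, map_zero]
  set u : B' →ₗ[R] ModuleCat.of R (LinearMap.ker (p0 ∘ₗ g1)) :=
    LinearMap.codRestrict _ f1 humem with hu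
  have hvmem : ∀ c : LinearMap.ker (p0 ∘ₗ g1), g1 c.1 ∈ LinearMap.range i0 := by
    intro c
    have hc : p0 (g1 c.1) = 0 := c.2
    obtain ⟨n, hn⟩ := (hex2 (g1 c.1)).mp hc
    exact ⟨n, hn⟩
  let e := LinearEquiv.ofInjective i0 hi0
  have ekey : ∀ y : LinearMap.range i0, i0 (e.symm y) = y := fun y => by
    have h1' := e.apply_symm_apply y
    have h2' : ((e (e.symm y) : LinearMap.range i0) : B0) = i0 (e.symm y) := rfl
    rw [← h2', h1']
  set v : (ModuleCat.of R (LinearMap.ker (p0 ∘ₗ g1)) : ModuleCat.{u} R) →ₗ[R] N1 :=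
    e.symm.toLinearMap ∘ₗ
      LinearMap.codRestrict (LinearMap.range i0) (g1 ∘ₗ (LinearMap.ker (p0 ∘ₗ g1)).subtype)
      (fun c => hvmem c) with hv
  have vkey : ∀ c, i0 (v c) = g1 c.1 := fun c => ekey ⟨g1 c.1, hvmem c⟩
  refine ⟨u, v, ?_, ?_, ?_⟩
  · intro a b hab
    apply hf1
    exact congrArg (fun z : LinearMap.ker (p0 ∘ₗ g1) => (z : A)) hab
  · intro n
    obtain ⟨a, ha⟩ := hg1 (i0 n)
    have hmem : a ∈ LinearMap.ker (p0 ∘ₗ g1) := by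
      show p0 (g1 a) = 0
      rw [ha]
      exact hex2.apply_apply_eq_zero n
    refine ⟨⟨a, hmem⟩, ?_⟩
    apply hi0
    rw [vkey ⟨a, hmem⟩, ha]
  · intro c
    constructor
    · intro hc
      have : g1 c.1 = 0 := by rw [← vkey c, hc, map_zero]
      obtain ⟨b, hb⟩ := (hex1 c.1).mp this
      refine ⟨b, ?_⟩
      apply Subtype.ext
      exact hb
    · rintro ⟨b, rfl⟩
      apply hi0
      rw [vkey (u b), map_zero]
      show g1 (f1 b) = 0
      exact hex1.apply_apply_eq_zero b

/-- Pullback of a surjection along a surjection: two s.e.s.'s. -/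
lemma pullback_ses {C B1 N1 N2 B' : ModuleCat.{u} R}
    (v : C →ₗ[R] N1) (pB : B1 →ₗ[R] N1) (iB : N2 →ₗ[R] B1) (u : B' →ₗ[R] C)
    (hB : IsShortExact iB pB) (hC : IsShortExact u v) :
    ∃ (P : ModuleCat.{u} R) (a : N2 →ₗ[R] P) (b : P →ₗ[R] C)
      (u' : B' →ₗ[R] P) (b' : P →ₗ[R] B1),
      IsShortExact a b ∧ IsShortExact u' b' := by
  obtain ⟨hiB, hpB, hexB⟩ := hB
  obtain ⟨hu, hv, hexC⟩ := hC
  set q : (ModuleCat.of R (C × B1) : ModuleCat.{u} R) →ₗ[R] N1 :=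
    v ∘ₗ LinearMap.fst R C B1 - pB ∘ₗ LinearMap.snd R C B1 with hq
  refine ⟨ModuleCat.of R (LinearMap.ker q), ?_, ?_, ?_, ?_, ?_⟩
  · exact LinearMap.codRestrict _ (LinearMap.prod 0 iB) (fun n => by
      show v 0 - pB (iB n) = 0
      rw [map_zero, hexB.apply_apply_eq_zero n, sub_zero])
  · exact LinearMap.fst R C B1 ∘ₗ (LinearMap.ker q).subtype
  · exact LinearMap.codRestrict _ (LinearMap.prod u 0) (fun x => by
      show v (u x) - pB 0 = 0
      rw [map_zero, hexC.apply_apply_eq_zero x, sub_zero])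
  · exact LinearMap.snd R C B1 ∘ₗ (LinearMap.ker q).subtype
  constructor
  · refine ⟨?_, ?_, ?_⟩
    · intro a b hab
      apply hiB
      exact congrArg (fun z => (Subtype.val z).2) hab
    · intro c
      obtain ⟨b1, hb1⟩ := hpB (v c)
      have hmem : ((c, b1) : C × B1) ∈ LinearMap.ker q := by
        show v c - pB b1 = 0
        rw [hb1, sub_self]
      exact ⟨⟨(c, b1), hmem⟩, rfl⟩
    · rintro ⟨⟨c, b1⟩, hmem⟩
      constructor
      · intro hc
        have hc' : c = 0 := hc
        have : pB b1 = 0 := by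
          have h2 : v c - pB b1 = 0 := hmem
          rw [hc', map_zero, zero_sub, neg_eq_zero] at h2
          exact h2
        obtain ⟨n, hn⟩ := (hexB b1).mp this
        refine ⟨n, ?_⟩
        apply Subtype.ext
        show ((0 : C), iB n) = (c, b1)
        rw [hc', hn]
      · rintro ⟨n, hn⟩
        rw [← hn]
        rfl
  · refine ⟨?_, ?_, ?_⟩
    · intro a b hab
      apply hu
      exact congrArg (fun z => (Subtype.val z).1) hab
    · intro b1
      obtain ⟨c, hc⟩ := hv (pB b1)
      have hmem : ((c, b1) : C × B1) ∈ LinearMap.ker q := by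
        show v c - pB b1 = 0
        rw [hc, sub_self]
      exact ⟨⟨(c, b1), hmem⟩, rfl⟩
    · rintro ⟨⟨c, b1⟩, hmem⟩
      constructor
      · intro hb
        have hb' : b1 = 0 := hb
        have : v c = 0 := by
          have h2 : v c - pB b1 = 0 := hmem
          rw [hb', map_zero, sub_zero] at h2
          exact h2
        obtain ⟨x, hx⟩ := (hexC c).mp this
        refine ⟨x, ?_⟩
        apply Subtype.ext
        show ((u x : C), (0 : B1)) = (c, b1)
        rw [hx, hb']
      · rintro ⟨x, hx⟩
        rw [← hx]
        rfl

/-- Products of short exact sequences are short exact. -/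
lemma pi_ses {ι : Type u} {K A N : ι → ModuleCat.{u} R}
    (f : ∀ j, K j →ₗ[R] A j) (g : ∀ j, A j →ₗ[R] N j)
    (h : ∀ j, IsShortExact (f j) (g j)) :
    IsShortExact (X := ModuleCat.of R (∀ j, K j)) (Y := ModuleCat.of R (∀ j, A j))
      (Z := ModuleCat.of R (∀ j, N j))
      (LinearMap.pi (fun j => (f j) ∘ₗ LinearMap.proj j))
      (LinearMap.pi (fun j => (g j) ∘ₗ LinearMap.proj j)) := by
  refine ⟨?_, ?_, ?_⟩
  · intro a b hab
    funext j
    exact (h j).1 (congrFun hab j)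
  · intro n
    have : ∀ j, ∃ a, g j a = n j := fun j => (h j).2.1 (n j)
    choose a ha using this
    exact ⟨a, funext ha⟩
  · intro y
    constructor
    · intro hy
      have : ∀ j, ∃ x, f j x = y j := fun j =>
        ((h j).2.2 (y j)).mp (congrFun hy j)
      choose x hx using this
      exact ⟨x, funext hx⟩
    · rintro ⟨x, rfl⟩
      funext j
      exact (h j).2.2.apply_apply_eq_zero (x j)

/-- `(𝒜, ℬ)` is a cotorsion pair in `Mod R`. -/
structure IsCotorsionPair (R : Type u) [Ring R] (𝒜 ℬ : Set (ModuleCat.{u} R)) : Prop where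
  mem_left : ∀ M, M ∈ 𝒜 ↔ ∀ N ∈ ℬ, ExtVanishes R 1 M N
  mem_right : ∀ N, N ∈ ℬ ↔ ∀ M ∈ 𝒜, ExtVanishes R 1 M N

/-- The cotorsion pair `(𝒜, ℬ)` is hereditary. -/
def IsHereditary (R : Type u) [Ring R] (𝒜 ℬ : Set (ModuleCat.{u} R)) : Prop :=
  ∀ i, 1 ≤ i → ∀ M ∈ 𝒜, ∀ N ∈ ℬ, ExtVanishes R i M N

/-- The cotorsion pair `(𝒜, ℬ)` is complete: every module has a special `ℬ`-preenvelope
and a special `𝒜`-precover. -/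
def IsCompletePair (R : Type u) [Ring R] (𝒜 ℬ : Set (ModuleCat.{u} R)) : Prop :=
  (∀ M : ModuleCat.{u} R, ∃ (N C : ModuleCat.{u} R) (f : M →ₗ[R] N) (g : N →ₗ[R] C),
      N ∈ ℬ ∧ C ∈ 𝒜 ∧ IsShortExact f g) ∧
  (∀ M : ModuleCat.{u} R, ∃ (K A' : ModuleCat.{u} R) (f : K →ₗ[R] A') (g : A' →ₗ[R] M),
      K ∈ ℬ ∧ A' ∈ 𝒜 ∧ IsShortExact f g)

/-- `M` is a Gorenstein `ℬ`-module with respect to the cotorsion pair `(𝒜, ℬ)`: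
`Ext^i(L, M) = 0` for all `i ≥ 1` and `L ∈ 𝒜 ∩ ℬ`, and `M` admits an exact left resolution
`⋯ → X₁ → X₀ → M → 0` by modules in `𝒜 ∩ ℬ` which stays exact under `Hom(L, -)` for
every `L ∈ 𝒜 ∩ ℬ`. -/
def IsGorenstein (𝒜 ℬ : Set (ModuleCat.{u} R)) (M : ModuleCat.{u} R) : Prop :=
  (∀ i, 1 ≤ i → ∀ L ∈ 𝒜 ∩ ℬ, ExtVanishes R i L M) ∧
  ∃ (X : ℕ → ModuleCat.{u} R) (d : ∀ n, X (n + 1) →ₗ[R] X n) (ε : X 0 →ₗ[R] M),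
    (∀ n, X n ∈ 𝒜 ∩ ℬ) ∧ Function.Surjective ε ∧
    Function.Exact (d 0) ε ∧ (∀ n, Function.Exact (d (n + 1)) (d n)) ∧
    ∀ L ∈ 𝒜 ∩ ℬ,
      Function.Surjective (fun h : L →ₗ[R] X 0 => ε.comp h) ∧
      Function.Exact (fun h : L →ₗ[R] X 1 => (d 0).comp h)
        (fun h : L →ₗ[R] X 0 => ε.comp h) ∧
      ∀ n, Function.Exact (fun h : L →ₗ[R] X (n + 2) => (d (n + 1)).comp h)
        (fun h : L →ₗ[R] X (n + 1) => (d n).comp h)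

/-- `M` has a coresolution `0 → M → X₀ → X₁ → ⋯ → Xₙ → 0` of length at most `n`
by modules in `𝒞`; i.e. the `𝒞`-injective dimension of `M` is at most `n`. -/
def CoresolutionDimLE (𝒞 : Set (ModuleCat.{u} R)) (M : ModuleCat.{u} R) (n : ℕ) : Prop :=
  ∃ (X : ℕ → ModuleCat.{u} R) (ε : M →ₗ[R] X 0) (d : ∀ k, X k →ₗ[R] X (k + 1)),
    (∀ k, X k ∈ 𝒞) ∧ Function.Injective ε ∧ Function.Exact ε (d 0) ∧
    (∀ k, Function.Exact (d k) (d (k + 1))) ∧ ∀ k, n < k → Subsingleton (X k)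

/-- The `𝒞`-injective dimension of `M`, as an element of `ℕ∞`. -/
noncomputable def coresDim (𝒞 : Set (ModuleCat.{u} R)) (M : ModuleCat.{u} R) : ℕ∞ :=
  sInf {k : ℕ∞ | ∃ m : ℕ, k = (m : ℕ∞) ∧ CoresolutionDimLE 𝒞 M m}


/-- Positive-degree Ext-vanishing against the core `𝒜 ∩ ℬ`. -/
def Vanish (𝒜 ℬ : Set (ModuleCat.{u} R)) (N : ModuleCat.{u} R) : Prop :=
  ∀ i, 1 ≤ i → ∀ L ∈ 𝒜 ∩ ℬ, ExtVanishes R i L N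

/-- An infinite chain of special approximations below `N` by modules of `ℬ`,
with all kernels Ext-orthogonal to the core. -/
def GChain (𝒜 ℬ : Set (ModuleCat.{u} R)) (N : ModuleCat.{u} R) : Prop :=
  ∃ (Nk Bk : ℕ → ModuleCat.{u} R) (ik : ∀ k, Nk k →ₗ[R] Bk k)
    (p0 : Bk 0 →ₗ[R] N) (pk : ∀ k, Bk (k + 1) →ₗ[R] Nk k),
    (∀ k, Bk k ∈ ℬ) ∧ (∀ k, Vanish 𝒜 ℬ (Nk k)) ∧ IsShortExact (ik 0) p0 ∧
    ∀ k, IsShortExact (ik (k + 1)) (pk k)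

section CP
variable {𝒜 ℬ : Set (ModuleCat.{u} R)}

lemma vanish_mid {K A N : ModuleCat.{u} R} {f : K →ₗ[R] A} {g : A →ₗ[R] N}
    (hse : IsShortExact f g) (hK : Vanish 𝒜 ℬ K) (hN : Vanish 𝒜 ℬ N) :
    Vanish 𝒜 ℬ A := by
  intro i hi L hL
  obtain ⟨n, rfl⟩ : ∃ n, i = n + 1 := ⟨i - 1, by omega⟩
  exact ext_mid hse L n (hK _ hi L hL) (hN _ hi L hL)

lemma mem_B_of_ses (hcp : IsCotorsionPair R 𝒜 ℬ) {K A N : ModuleCat.{u} R}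
    {f : K →ₗ[R] A} {g : A →ₗ[R] N} (hse : IsShortExact f g)
    (hK : K ∈ ℬ) (hN : N ∈ ℬ) : A ∈ ℬ := by
  rw [hcp.mem_right]
  intro M' hM'
  exact ext_mid hse M' 0 ((hcp.mem_right K).1 hK M' hM') ((hcp.mem_right N).1 hN M' hM')

lemma vanish_of_mem_B (hher : IsHereditary R 𝒜 ℬ) {Q : ModuleCat.{u} R} (hQ : Q ∈ ℬ) :
    Vanish 𝒜 ℬ Q := fun i hi L hL => hher i hi L hL.1 Q hQ

lemma prod_mem_B (hcp : IsCotorsionPair R 𝒜 ℬ) {ι : Type u} {Q : ι → ModuleCat.{u} R}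
    (hQ : ∀ j, Q j ∈ ℬ) : ModuleCat.of R (∀ j, Q j) ∈ ℬ := by
  rw [hcp.mem_right]
  intro M' hM'
  exact extVanishes_pi Q M' 0 (fun j => (hcp.mem_right (Q j)).1 (hQ j) M' hM')

/-- The key step: a module with a `GChain` is the quotient of a core module with a
kernel that again carries a `GChain`. -/
lemma step_lemma (hcp : IsCotorsionPair R 𝒜 ℬ) (hher : IsHereditary R 𝒜 ℬ)
    (hcom : IsCompletePair R 𝒜 ℬ) {N : ModuleCat.{u} R} (hgN : GChain 𝒜 ℬ N) :
    ∃ (C X : ModuleCat.{u} R) (uu : C →ₗ[R] X) (pp : X →ₗ[R] N),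
      X ∈ 𝒜 ∩ ℬ ∧ IsShortExact uu pp ∧ Vanish 𝒜 ℬ C ∧ GChain 𝒜 ℬ C := by
  obtain ⟨Nk, Bk, ik, p0, pk, hB, hvan, hses0, hsesk⟩ := hgN
  obtain ⟨K', A', fA, gA, hK'B, hA'A, hsesA⟩ := hcom.2 (Bk 0)
  have hA'B : A' ∈ ℬ := mem_B_of_ses hcp hsesA hK'B (hB 0)
  have hpsurj : Function.Surjective (p0 ∘ₗ gA) := (hses0.2.1).comp hsesA.2.1
  obtain ⟨uC, vC, hsesC⟩ := comp_ker_ses fA gA (ik 0) p0 hsesA hses0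
  have hvC : Vanish 𝒜 ℬ (ModuleCat.of R (LinearMap.ker (p0 ∘ₗ gA))) :=
    vanish_mid hsesC (vanish_of_mem_B hher hK'B) (hvan 0)
  obtain ⟨P, aP, bP, uP, bP', hsesP, hsesP'⟩ := pullback_ses vC (pk 0) (ik 1) uC (hsesk 0) hsesC
  have hPB : P ∈ ℬ := mem_B_of_ses hcp hsesP' hK'B (hB 1)
  refine ⟨ModuleCat.of R (LinearMap.ker (p0 ∘ₗ gA)), A', (LinearMap.ker (p0 ∘ₗ gA)).subtype,
    p0 ∘ₗ gA, ⟨hA'A, hA'B⟩, ker_ses _ hpsurj, hvC, ?_⟩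
  refine ⟨fun k => Nat.casesOn k (Nk 1) (fun k' => Nk (k' + 2)),
    fun k => Nat.casesOn k P (fun k' => Bk (k' + 2)),
    fun k => Nat.casesOn k aP (fun k' => ik (k' + 2)),
    bP,
    fun k => Nat.casesOn k (pk 1) (fun k' => pk (k' + 2)),
    ?_, ?_, hsesP, ?_⟩
  · intro k
    cases k with
    | zero => exact hPB
    | succ k' => exact hB (k' + 2)
  · intro k
    cases k with
    | zero => exact hvan 1
    | succ k' => exact hvan (k' + 2)
  · intro k
    cases k with
    | zero => exact hsesk 1
    | succ k' => exact hsesk (k' + 2)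

lemma exact_two_ses {C1 X1 X0 W : ModuleCat.{u} R}
    (u1 : C1 →ₗ[R] X0) (w : X0 →ₗ[R] W) (p1 : X1 →ₗ[R] C1)
    (hexw : Function.Exact u1 w) (hp1 : Function.Surjective p1) :
    Function.Exact (u1 ∘ₗ p1) w := by
  intro y
  rw [hexw y]
  constructor
  · rintro ⟨c, rfl⟩
    obtain ⟨x, rfl⟩ := hp1 c
    exact ⟨x, rfl⟩
  · rintro ⟨x, rfl⟩
    exact ⟨p1 x, rfl⟩

lemma exact_two_ses' {C2 X2 C1 X1 X0 : ModuleCat.{u} R}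
    (u1 : C1 →ₗ[R] X0) (p1 : X1 →ₗ[R] C1) (u2 : C2 →ₗ[R] X1) (p2 : X2 →ₗ[R] C2)
    (hu1 : Function.Injective u1) (hex : Function.Exact u2 p1)
    (hp2 : Function.Surjective p2) :
    Function.Exact (u2 ∘ₗ p2) (u1 ∘ₗ p1) := by
  intro y
  constructor
  · intro hy
    have hy' : p1 y = 0 := hu1 (by rw [map_zero]; exact hy)
    obtain ⟨c, hc⟩ := (hex y).mp hy'
    obtain ⟨x, rfl⟩ := hp2 c
    exact ⟨x, hc⟩
  · rintro ⟨x, rfl⟩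
    show u1 (p1 (u2 (p2 x))) = 0
    rw [hex.apply_apply_eq_zero (p2 x), map_zero]

lemma exact_post_inj {C2 X1 C1 X0 : ModuleCat.{u} R}
    (u1 : C1 →ₗ[R] X0) (p1 : X1 →ₗ[R] C1) (u2 : C2 →ₗ[R] X1)
    (hu1 : Function.Injective u1) (hex : Function.Exact u2 p1) :
    Function.Exact u2 (u1 ∘ₗ p1) := by
  intro y
  rw [← hex y]
  constructor
  · intro hy
    exact hu1 (by rw [map_zero]; exact hy)
  · intro hy
    show u1 (p1 y) = 0
    rw [hy, map_zero]

section CP2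
variable {𝒜 ℬ : Set (ModuleCat.{u} R)}

lemma hom_exact_helper {X1 C1 X0 W : ModuleCat.{u} R} (L : ModuleCat.{u} R)
    (q : X0 →ₗ[R] W) (u1 : C1 →ₗ[R] X0) (p1 : X1 →ₗ[R] C1)
    (hq : Function.Exact u1 q) (hu1 : Function.Injective u1)
    (hlift : ∀ v : L →ₗ[R] C1, ∃ w : L →ₗ[R] X1, p1.comp w = v) :
    Function.Exact (fun h : L →ₗ[R] X1 => (u1 ∘ₗ p1).comp h)
      (fun h : L →ₗ[R] X0 => q.comp h) := by
  intro φ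
  constructor
  · intro hφ
    have hmem : ∀ x, φ x ∈ LinearMap.range u1 := fun x => by
      have hx : q (φ x) = 0 := LinearMap.congr_fun hφ x
      obtain ⟨c, hc⟩ := (hq (φ x)).mp hx
      exact ⟨c, hc⟩
    obtain ⟨v, hv⟩ := factor_inj u1 hu1 (ModuleCat.ofHom φ) hmem
    obtain ⟨w, hw⟩ := hlift v.hom
    refine ⟨w, ?_⟩
    ext x
    show u1 (p1 (w x)) = φ x
    have e1 : p1 (w x) = v x := LinearMap.congr_fun hw x
    have e2 : u1 (v x) = φ x := congrArg (fun (m : L ⟶ X0) => m x) hv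
    rw [e1]
    exact e2
  · rintro ⟨w, rfl⟩
    ext x
    show q (u1 (p1 (w x))) = 0
    exact hq.apply_apply_eq_zero (p1 (w x))

lemma build_resolution (hcp : IsCotorsionPair R 𝒜 ℬ) (hher : IsHereditary R 𝒜 ℬ)
    (hcom : IsCompletePair R 𝒜 ℬ) {N : ModuleCat.{u} R}
    (hvN : Vanish 𝒜 ℬ N) (hgN : GChain 𝒜 ℬ N) : IsGorenstein 𝒜 ℬ N := by
  refine ⟨hvN, ?_⟩
  have step : ∀ C : {C : ModuleCat.{u} R // GChain 𝒜 ℬ C},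
      ∃ (C' : {C : ModuleCat.{u} R // GChain 𝒜 ℬ C}) (X : ModuleCat.{u} R)
        (uu : C'.1 →ₗ[R] X) (pp : X →ₗ[R] C.1),
        X ∈ 𝒜 ∩ ℬ ∧ IsShortExact uu pp ∧ Vanish 𝒜 ℬ C'.1 := by
    intro C
    obtain ⟨C', X, uu, pp, hX, hs, hv, hg⟩ := step_lemma hcp hher hcom C.2
    exact ⟨⟨C', hg⟩, X, uu, pp, hX, hs, hv⟩
  choose Cf Xf uf pf hXmem hs hv using step
  let seq : ℕ → {C : ModuleCat.{u} R // GChain 𝒜 ℬ C} :=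
    fun n => Nat.recAux ⟨N, hgN⟩ (fun _ t => Cf t) n
  have hseq : ∀ n, seq (n + 1) = Cf (seq n) := fun n => rfl
  refine ⟨fun n => Xf (seq n), fun n => uf (seq n) ∘ₗ pf (seq (n + 1)), pf (seq 0),
    fun n => hXmem (seq n), (hs (seq 0)).2.1, ?_, ?_, ?_⟩
  · exact exact_two_ses (uf (seq 0)) (pf (seq 0)) (pf (seq 1))
      (hs (seq 0)).2.2 (hs (seq 1)).2.1
  · intro n
    exact exact_two_ses' (uf (seq n)) (pf (seq (n + 1))) (uf (seq (n + 1)))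
      (pf (seq (n + 2))) (hs (seq n)).1 (hs (seq (n + 1))).2.2 (hs (seq (n + 2))).2.1
  · intro L hL
    have hlift : ∀ m : ℕ, ∀ v : L →ₗ[R] (seq m).1,
        ∃ w : L →ₗ[R] Xf (seq m), (pf (seq m)).comp w = v := by
      intro m v
      obtain ⟨w, hw⟩ := hom_lift_of_ext1 (hs (seq m)) L
        (hv (seq m) 1 le_rfl L hL) (ModuleCat.ofHom v)
      exact ⟨w.hom, congrArg ModuleCat.Hom.hom hw⟩
    refine ⟨?_, ?_, ?_⟩
    · intro φ
      obtain ⟨w, hw⟩ := hlift 0 φ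
      exact ⟨w, hw⟩
    · exact hom_exact_helper L (pf (seq 0)) (uf (seq 0)) (pf (seq 1))
        (hs (seq 0)).2.2 (hs (seq 0)).1 (hlift 1)
    · intro n
      exact hom_exact_helper L (uf (seq n) ∘ₗ pf (seq (n + 1))) (uf (seq (n + 1)))
        (pf (seq (n + 2)))
        (exact_post_inj (uf (seq n)) (pf (seq (n + 1))) (uf (seq (n + 1)))
          (hs (seq n)).1 (hs (seq (n + 1))).2.2)
        (hs (seq (n + 1))).1 (hlift (n + 2))

end CP2

section CP3
variable {𝒜 ℬ : Set (ModuleCat.{u} R)}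

noncomputable def chainN {M : ModuleCat.{u} R} (X : ℕ → ModuleCat.{u} R)
    (d : ∀ n, X (n + 1) →ₗ[R] X n) (ε : X 0 →ₗ[R] M) : ℕ → ModuleCat.{u} R
  | 0 => ModuleCat.of R (LinearMap.ker ε)
  | (k + 1) => ModuleCat.of R (LinearMap.ker (d k))

noncomputable def chainI {M : ModuleCat.{u} R} (X : ℕ → ModuleCat.{u} R)
    (d : ∀ n, X (n + 1) →ₗ[R] X n) (ε : X 0 →ₗ[R] M) :
    ∀ k, chainN X d ε k →ₗ[R] X k
  | 0 => (LinearMap.ker ε).subtype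
  | (k + 1) => (LinearMap.ker (d k)).subtype

noncomputable def chainP {M : ModuleCat.{u} R} (X : ℕ → ModuleCat.{u} R)
    (d : ∀ n, X (n + 1) →ₗ[R] X n) (ε : X 0 →ₗ[R] M)
    (hex0 : Function.Exact (d 0) ε)
    (hexn : ∀ n, Function.Exact (d (n + 1)) (d n)) :
    ∀ k, X (k + 1) →ₗ[R] chainN X d ε k
  | 0 => LinearMap.codRestrict (LinearMap.ker ε) (d 0)
      (fun x => hex0.apply_apply_eq_zero x)
  | (k + 1) => LinearMap.codRestrict (LinearMap.ker (d k)) (d (k + 1))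
      (fun x => (hexn k).apply_apply_eq_zero x)

lemma gorenstein_chain (hcp : IsCotorsionPair R 𝒜 ℬ) (hher : IsHereditary R 𝒜 ℬ)
    {M : ModuleCat.{u} R} (hg : IsGorenstein 𝒜 ℬ M) : GChain 𝒜 ℬ M := by
  obtain ⟨hvan, X, d, ε, hXmem, hεsurj, hex0, hexn, hhom⟩ := hg
  let Nk := chainN X d ε
  let ik := chainI X d ε
  let pk := chainP X d ε hex0 hexn
  have hses0' : IsShortExact (ik 0) ε := by
    refine ⟨Submodule.injective_subtype _, hεsurj, fun y => ⟨fun hy => ⟨⟨y, hy⟩, rfl⟩, ?_⟩⟩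
    rintro ⟨⟨x, hx⟩, rfl⟩
    exact hx
  have hsesk' : ∀ k, IsShortExact (ik (k + 1)) (pk k) := by
    intro k
    cases k with
    | zero =>
      refine ⟨Submodule.injective_subtype _, ?_, ?_⟩
      · rintro ⟨y, hy⟩
        obtain ⟨x, hx⟩ := (hex0 y).mp hy
        exact ⟨x, Subtype.ext hx⟩
      · intro y
        constructor
        · intro hy
          have : d 0 y = 0 := congrArg Subtype.val hy
          exact ⟨⟨y, this⟩, rfl⟩
        · rintro ⟨⟨z, hz⟩, rfl⟩
          exact Subtype.ext hz
    | succ k' =>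
      refine ⟨Submodule.injective_subtype _, ?_, ?_⟩
      · rintro ⟨y, hy⟩
        obtain ⟨x, hx⟩ := ((hexn k') y).mp hy
        exact ⟨x, Subtype.ext hx⟩
      · intro y
        constructor
        · intro hy
          have : d (k' + 1) y = 0 := congrArg Subtype.val hy
          exact ⟨⟨y, this⟩, rfl⟩
        · rintro ⟨⟨z, hz⟩, rfl⟩
          exact Subtype.ext hz
  have homsur : ∀ k, ∀ L ∈ 𝒜 ∩ ℬ, ∀ h : L →ₗ[R] Nk k,
      ∃ w : L →ₗ[R] X (k + 1), (pk k).comp w = h := by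
    intro k L hL h
    cases k with
    | zero =>
      have hcomp : ε.comp ((ik 0).comp h) = 0 := by
        ext x
        exact (h x).2
      obtain ⟨w, hw⟩ := (((hhom L hL).2.1) ((ik 0).comp h)).mp hcomp
      refine ⟨w, ?_⟩
      ext x
      exact Subtype.ext (LinearMap.congr_fun hw x)
    | succ k' =>
      have hcomp : (d k').comp ((ik (k' + 1)).comp h) = 0 := by
        ext x
        exact (h x).2
      obtain ⟨w, hw⟩ := (((hhom L hL).2.2 k') ((ik (k' + 1)).comp h)).mp hcomp
      refine ⟨w, ?_⟩
      ext x
      exact Subtype.ext (LinearMap.congr_fun hw x)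
  have hvanN : ∀ k, Vanish 𝒜 ℬ (Nk k) := by
    intro k
    induction k with
    | zero =>
      intro i hi L hL
      obtain ⟨n, rfl⟩ : ∃ n, i = n + 1 := ⟨i - 1, by omega⟩
      cases n with
      | zero =>
        refine ext_ker_one hses0' L (hher 1 le_rfl L hL.1 (X 0) (hXmem 0).2) ?_
        intro w
        obtain ⟨ψ, hψ⟩ := (hhom L hL).1 w.hom
        exact ⟨ModuleCat.ofHom ψ, congrArg ModuleCat.ofHom hψ⟩
      | succ m =>
        exact ext_ker_succ hses0' L m (hher (m + 2) (by omega) L hL.1 (X 0) (hXmem 0).2)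
          (hvan (m + 1) (by omega) L hL)
    | succ k ih =>
      intro i hi L hL
      obtain ⟨n, rfl⟩ : ∃ n, i = n + 1 := ⟨i - 1, by omega⟩
      cases n with
      | zero =>
        refine ext_ker_one (hsesk' k) L
          (hher 1 le_rfl L hL.1 (X (k + 1)) (hXmem (k + 1)).2) ?_
        intro w
        obtain ⟨ψ, hψ⟩ := homsur k L hL w.hom
        exact ⟨ModuleCat.ofHom ψ, congrArg ModuleCat.ofHom hψ⟩
      | succ m =>
        exact ext_ker_succ (hsesk' k) L m
          (hher (m + 2) (by omega) L hL.1 (X (k + 1)) (hXmem (k + 1)).2)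
          (ih (m + 1) (by omega) L hL)
  exact ⟨Nk, X, ik, ε, pk, fun k => (hXmem k).2, hvanN, hses0', hsesk'⟩

/-- the class of Gorenstein `ℬ`-modules is closed under arbitrary direct
products. -/
theorem gorenstein_pi
    (𝒜 ℬ : Set (ModuleCat.{u} R)) (hcp : IsCotorsionPair R 𝒜 ℬ)
    (hher : IsHereditary R 𝒜 ℬ) (hcom : IsCompletePair R 𝒜 ℬ)
    {ι : Type u} (M : ι → ModuleCat.{u} R)
    (hM : ∀ i, IsGorenstein 𝒜 ℬ (M i)) :
    IsGorenstein 𝒜 ℬ (ModuleCat.of R (∀ i, M i)) := by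
  have hvan : Vanish 𝒜 ℬ (ModuleCat.of R (∀ i, M i)) := by
    intro i hi L hL
    obtain ⟨n, rfl⟩ : ∃ n, i = n + 1 := ⟨i - 1, by omega⟩
    exact extVanishes_pi M L n (fun j => (hM j).1 (n + 1) hi L hL)
  have hch : ∀ j, GChain 𝒜 ℬ (M j) := fun j => gorenstein_chain hcp hher (hM j)
  choose Nk Bk ik p0 pk hB hvk hses0 hsesk using hch
  have hgprod : GChain 𝒜 ℬ (ModuleCat.of R (∀ i, M i)) := by
    refine ⟨fun k => ModuleCat.of R (∀ j, Nk j k), fun k => ModuleCat.of R (∀ j, Bk j k),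
      fun k => LinearMap.pi (fun j => (ik j k) ∘ₗ LinearMap.proj j),
      LinearMap.pi (fun j => (p0 j) ∘ₗ LinearMap.proj j),
      fun k => LinearMap.pi (fun j => (pk j k) ∘ₗ LinearMap.proj j),
      fun k => prod_mem_B hcp (fun j => hB j k),
      ?_, ?_, ?_⟩
    · intro k i hi L hL
      obtain ⟨n, rfl⟩ : ∃ n, i = n + 1 := ⟨i - 1, by omega⟩
      exact extVanishes_pi (fun j => Nk j k) L n (fun j => hvk j k (n + 1) hi L hL)
    · exact pi_ses _ _ (fun j => hses0 j)
    · intro k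
      exact pi_ses _ _ (fun j => hsesk j k)
  exact build_resolution hcp hher hcom hvan hgprod
end CP3
end CP
end

section
/- Let (A, B) be a complete hereditary cotorsion pair in Mod R. Every module in B is a Gorenstein B-module, and every injective R-module is a Gorenstein B-module. -/
open CategoryTheory

universe u

variable {R : Type u} [Ring R]

section Aux

lemma isZero_iff_subsingleton {S : Type*} [Ring S] (M : ModuleCat S) :
    Limits.IsZero M ↔ Subsingleton M := by
  constructor
  · intro h
    rw [Limits.IsZero.iff_id_eq_zero] at h
    exact ⟨fun a b => by
      have := congrFun (congrArg (fun f : M ⟶ M => (f : M → M)) h)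
      simpa using (this a).trans (this b).symm⟩
  · intro h
    exact ModuleCat.isZero_of_subsingleton M

lemma extVanishes_iff_res (L Y : ModuleCat.{u} R) (P : ProjectiveResolution L) (n : ℕ) :
    ExtVanishes R (n+1) L Y ↔
      ∀ v : P.complex.X (n+1) ⟶ Y, P.complex.d (n+2) (n+1) ≫ v = 0 →
        ∃ w : P.complex.X n ⟶ Y, P.complex.d (n+1) n ≫ w = v := by
  have e := P.isoExt (R := ℤ) (n+1) Y
  rw [ExtVanishes, ← isZero_iff_subsingleton, e.isZero_iff,
    ← HomologicalComplex.exactAt_iff_isZero_homology,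
    HomologicalComplex.exactAt_iff' _ n (n+1) (n+2) (by simp) (by simp),
    ShortComplex.moduleCat_exact_iff]
  rfl

/-- factor a map through an injective map -/
lemma factor_through_injective {X K A : ModuleCat.{u} R} (f : K →ₗ[R] A)
    (hf : Function.Injective f) (u : X →ₗ[R] A)
    (h : ∀ x, ∃ k, f k = u x) : ∃ v : X →ₗ[R] K, f.comp v = u := by
  refine ⟨(LinearEquiv.ofInjective f hf).symm.toLinearMap.comp
    (u.codRestrict (LinearMap.range f) (fun x => by
      obtain ⟨k, hk⟩ := h x; exact ⟨k, hk⟩)), ?_⟩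
  ext x
  have : ∀ y : LinearMap.range f, f ((LinearEquiv.ofInjective f hf).symm y) = ↑y := by
    intro y
    conv_rhs => rw [← LinearEquiv.apply_symm_apply (LinearEquiv.ofInjective f hf) y]
    rw [LinearEquiv.ofInjective_apply]
  simpa using this _

/-- bundled data of a projective resolution with an explicit augmentation -/
structure Res (L : ModuleCat.{u} R) where
  P : ProjectiveResolution L
  π0 : P.complex.X 0 ⟶ L
  surj : Function.Surjective π0
  comm : P.complex.d 1 0 ≫ π0 = 0
  exact0 : ∀ x : P.complex.X 0, π0 x = 0 → ∃ y, P.complex.d 1 0 y = x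
  desc : ∀ {Y : ModuleCat.{u} R} (u : P.complex.X 0 ⟶ Y), P.complex.d 1 0 ≫ u = 0 →
    ∃ ψ : L ⟶ Y, π0 ≫ ψ = u

noncomputable def res (L : ModuleCat.{u} R) : Res L := by
  let P := ProjectiveResolution.of L
  let e : ((ChainComplex.single₀ (ModuleCat.{u} R)).obj L).X 0 ≅ L :=
    HomologicalComplex.singleObjXSelf (ComplexShape.down ℕ) 0 L
  refine ⟨P, P.π.f 0 ≫ e.hom, ?_, ?_, ?_, ?_⟩
  · rw [← ModuleCat.epi_iff_surjective]
    infer_instance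
  · rw [← Category.assoc, P.complex_d_comp_π_f_zero, Limits.zero_comp]
  · intro x hx
    have hex := P.exact₀
    rw [ShortComplex.moduleCat_exact_iff] at hex
    refine hex x ?_
    have : e.hom ((P.π.f 0) x) = 0 := hx
    have hinj : Function.Injective e.hom := by
      rw [← ModuleCat.mono_iff_injective]; infer_instance
    apply hinj
    exact this.trans (map_zero _).symm
  · intro Y u hu
    obtain ⟨m, hm⟩ := Limits.CokernelCofork.IsColimit.desc' P.isColimitCokernelCofork u hu
    exact ⟨e.inv ≫ m, by exact (Category.assoc _ _ _).trans ((congrArg (P.π.f 0 ≫ ·) (e.hom_inv_id_assoc m)).trans hm)⟩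

lemma ext_lift {L K A M : ModuleCat.{u} R} {f : K →ₗ[R] A} {g : A →ₗ[R] M}
    (hf : Function.Injective f) (hg : Function.Surjective g) (hex : Function.Exact f g)
    (h1 : ExtVanishes R 1 L K) (φ : L →ₗ[R] M) : ∃ ψ : L →ₗ[R] A, g.comp ψ = φ := by
  obtain ⟨P, π0, hsurj, hcomm, hexact0, hdesc⟩ := res L
  haveI hgepi : Epi (ModuleCat.ofHom g) := (ModuleCat.epi_iff_surjective _).mpr hg
  let u0 : P.complex.X 0 ⟶ A := Projective.factorThru (π0 ≫ ModuleCat.ofHom φ) (ModuleCat.ofHom g)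
  have hu0 : u0 ≫ ModuleCat.ofHom g = π0 ≫ ModuleCat.ofHom φ := Projective.factorThru_comp _ _
  obtain ⟨v, hv⟩ := factor_through_injective f hf
    (u0.hom.comp (P.complex.d 1 0).hom) (fun x => by
      have h0 : P.complex.d 1 0 ≫ u0 ≫ ModuleCat.ofHom g = 0 := by
        rw [hu0, ← Category.assoc, hcomm, Limits.zero_comp]
      have h0x : g (u0 ((P.complex.d 1 0) x)) = 0 := by
        have := congrArg (fun (t : P.complex.X 1 ⟶ M) => t x) h0
        simpa using this
      exact ((hex _).mp h0x))
  have hcocycle : P.complex.d 2 1 ≫ ModuleCat.ofHom v = 0 := by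
    apply ModuleCat.hom_ext; apply LinearMap.ext; intro x
    show v ((P.complex.d 2 1) x) = 0
    apply hf
    have hvx : f (v ((P.complex.d 2 1) x)) = u0 ((P.complex.d 1 0) ((P.complex.d 2 1) x)) :=
      congrArg (fun (t : _ →ₗ[R] A) => t ((P.complex.d 2 1) x)) hv
    have hdd : (P.complex.d 1 0) ((P.complex.d 2 1) x) = 0 :=
      calc (P.complex.d 1 0) ((P.complex.d 2 1) x)
          = (P.complex.d 2 1 ≫ P.complex.d 1 0) x := rfl
        _ = (0 : P.complex.X 2 ⟶ P.complex.X 0) x := by rw [P.complex.d_comp_d]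
        _ = 0 := rfl
    rw [hvx, hdd, map_zero, map_zero]
  obtain ⟨w0, hw0⟩ := (extVanishes_iff_res L K P 0).mp h1 (ModuleCat.ofHom v) hcocycle
  let u : P.complex.X 0 ⟶ A := u0 - (w0 ≫ ModuleCat.ofHom f)
  have hu : P.complex.d 1 0 ≫ u = 0 := by
    have : P.complex.d 1 0 ≫ w0 ≫ ModuleCat.ofHom f = P.complex.d 1 0 ≫ u0 := by
      rw [← Category.assoc, hw0]
      apply ModuleCat.hom_ext
      show f.comp v = u0.hom.comp (P.complex.d 1 0).hom
      exact hv
    rw [Preadditive.comp_sub, this, sub_self]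
  obtain ⟨ψ, hψ⟩ := hdesc u hu
  refine ⟨ψ.hom, ?_⟩
  apply LinearMap.ext; intro l
  obtain ⟨x, rfl⟩ := hsurj l
  have hψx : ψ (π0 x) = u x := congrArg (fun (t : _ ⟶ A) => t x) hψ
  have hu0x : g (u0 x) = φ (π0 x) := congrArg (fun (t : _ ⟶ M) => t x) hu0
  show g (ψ (π0 x)) = φ (π0 x)
  rw [hψx]
  show g (u0 x - f (w0 x)) = φ (π0 x)
  rw [map_sub, hu0x, (hex _).mpr ⟨w0 x, rfl⟩, sub_zero]

lemma ext1_extension {L K A M : ModuleCat.{u} R} {f : K →ₗ[R] A} {g : A →ₗ[R] M}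
    (hf : Function.Injective f) (hg : Function.Surjective g) (hex : Function.Exact f g)
    (hK : ExtVanishes R 1 L K) (hM : ExtVanishes R 1 L M) :
    ExtVanishes R 1 L A := by
  let P := ProjectiveResolution.of L
  haveI hgepi : Epi (ModuleCat.ofHom g) := (ModuleCat.epi_iff_surjective _).mpr hg
  rw [extVanishes_iff_res L A P 0]
  intro v hv
  have hvg : P.complex.d 2 1 ≫ (v ≫ ModuleCat.ofHom g) = 0 := by
    rw [← Category.assoc, hv, Limits.zero_comp]
  obtain ⟨s, hs⟩ := (extVanishes_iff_res L M P 0).mp hM _ hvg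
  let t : P.complex.X 0 ⟶ A := Projective.factorThru s (ModuleCat.ofHom g)
  have ht : t ≫ ModuleCat.ofHom g = s := Projective.factorThru_comp _ _
  let v' : P.complex.X 1 ⟶ A := v - P.complex.d 1 0 ≫ t
  obtain ⟨uu, huu⟩ := factor_through_injective f hf v'.hom (fun x => by
    refine (hex _).mp ?_
    have h1 : g (v x) = s ((P.complex.d 1 0) x) := by
      have := congrArg (fun (t : _ ⟶ M) => t x) hs
      simpa using this.symm
    show g (v x - t ((P.complex.d 1 0) x)) = 0
    have h2 : g (t ((P.complex.d 1 0) x)) = s ((P.complex.d 1 0) x) :=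
      congrArg (fun (t' : _ ⟶ M) => t' ((P.complex.d 1 0) x)) ht
    rw [map_sub, h1, h2, sub_self])
  have hucoc : P.complex.d 2 1 ≫ ModuleCat.ofHom uu = 0 := by
    apply ModuleCat.hom_ext; apply LinearMap.ext; intro x
    show uu ((P.complex.d 2 1) x) = 0
    apply hf
    have huux : f (uu ((P.complex.d 2 1) x)) = v' ((P.complex.d 2 1) x) :=
      congrArg (fun (t : _ →ₗ[R] A) => t ((P.complex.d 2 1) x)) huu
    have hdd : (P.complex.d 1 0) ((P.complex.d 2 1) x) = 0 :=
      calc (P.complex.d 1 0) ((P.complex.d 2 1) x)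
          = (P.complex.d 2 1 ≫ P.complex.d 1 0) x := rfl
        _ = (0 : P.complex.X 2 ⟶ P.complex.X 0) x := by rw [P.complex.d_comp_d]
        _ = 0 := rfl
    have hvx : v ((P.complex.d 2 1) x) = 0 := by
      have := congrArg (fun (t : _ ⟶ A) => t x) hv
      simpa using this
    rw [huux, map_zero]
    show v ((P.complex.d 2 1) x) - t ((P.complex.d 1 0) ((P.complex.d 2 1) x)) = 0
    rw [hvx, hdd, map_zero, sub_zero]
  obtain ⟨r, hr⟩ := (extVanishes_iff_res L K P 0).mp hK (ModuleCat.ofHom uu) hucoc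
  refine ⟨t + r ≫ ModuleCat.ofHom f, ?_⟩
  apply ModuleCat.hom_ext; apply LinearMap.ext; intro x
  have hrx : r ((P.complex.d 1 0) x) = uu x := by
    have := congrArg (fun (tt : _ ⟶ K) => tt x) hr
    simpa using this
  have huux : f (uu x) = v' x := congrArg (fun (tt : _ →ₗ[R] A) => tt x) huu
  show t ((P.complex.d 1 0) x) + f (r ((P.complex.d 1 0) x)) = v x
  rw [hrx, huux]
  show t ((P.complex.d 1 0) x) + (v x - t ((P.complex.d 1 0) x)) = v x
  abel

lemma extVanishes_of_injective {L M : ModuleCat.{u} R} (hM : Injective M) (n : ℕ) :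
    ExtVanishes R (n+1) L M := by
  let P := ProjectiveResolution.of L
  rw [extVanishes_iff_res L M P n]
  intro v hv
  set D : P.complex.X (n+1) →ₗ[R] P.complex.X n := (P.complex.d (n+1) n).hom with hD
  have hker : ∀ x ∈ LinearMap.ker D, v x = 0 := by
    intro x hx
    have hexd := P.exact_succ n
    rw [ShortComplex.moduleCat_exact_iff] at hexd
    obtain ⟨y, hy⟩ := hexd x (LinearMap.mem_ker.mp hx)
    have hvy : v ((P.complex.d (n+2) (n+1)) y) = 0 := by
      have := congrArg (fun (t : _ ⟶ M) => t y) hv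
      simpa using this
    rw [← hy]; exact hvy
  let vbar : (P.complex.X (n+1) ⧸ LinearMap.ker D) →ₗ[R] M :=
    Submodule.liftQ _ v.hom (fun x hx => hker x hx)
  let q := D.quotKerEquivRange
  let w' : ModuleCat.of R ↥(LinearMap.range D) ⟶ M := ModuleCat.ofHom (vbar.comp q.symm.toLinearMap)
  let ι : ModuleCat.of R ↥(LinearMap.range D) ⟶ P.complex.X n := ModuleCat.ofHom (LinearMap.range D).subtype
  haveI : Mono ι := (ModuleCat.mono_iff_injective _).mpr (Submodule.injective_subtype _)
  haveI := hM
  refine ⟨Injective.factorThru w' ι, ?_⟩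
  apply ModuleCat.hom_ext; apply LinearMap.ext; intro x
  have h1 : ι ≫ Injective.factorThru w' ι = w' := Injective.comp_factorThru w' ι
  have hmem : D x ∈ LinearMap.range D := ⟨x, rfl⟩
  have h2 : (Injective.factorThru w' ι) (D x) = w' (⟨D x, hmem⟩ : LinearMap.range D) :=
    congrArg (fun (t : _ ⟶ M) => t (⟨D x, hmem⟩ : LinearMap.range D)) h1
  show (Injective.factorThru w' ι) (D x) = v x
  rw [h2]
  show vbar (q.symm ⟨D x, hmem⟩) = v x
  have hq : q (Submodule.Quotient.mk x) = ⟨D x, hmem⟩ := by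
    apply Subtype.ext
    exact D.quotKerEquivRange_apply_mk x
  rw [← hq, LinearEquiv.symm_apply_apply]
  exact Submodule.liftQ_apply _ _ x

end Aux

/-- iterated special precover kernels -/
noncomputable def MseqAux (M : ModuleCat.{u} R) (Kf : ModuleCat.{u} R → ModuleCat.{u} R) :
    ℕ → ModuleCat.{u} R := fun n => Nat.rec M (fun _ Mn => Kf Mn) n

/-- every module in `ℬ` is a Gorenstein `ℬ`-module, and every injective
module is a Gorenstein `ℬ`-module. -/

theorem gorenstein_of_mem_B_and_of_injective
    (𝒜 ℬ : Set (ModuleCat.{u} R)) (hcp : IsCotorsionPair R 𝒜 ℬ)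
    (hher : IsHereditary R 𝒜 ℬ) (hcom : IsCompletePair R 𝒜 ℬ) :
    (∀ M ∈ ℬ, IsGorenstein 𝒜 ℬ M) ∧
    (∀ M : ModuleCat.{u} R, Injective M → IsGorenstein 𝒜 ℬ M) := by
  obtain ⟨-, prec⟩ := hcom
  choose Kf Af ff gf hKB hAmem hseq using prec
  have hinj0 : ∀ N, Function.Injective (ff N) := fun N => (hseq N).1
  have hsurj0 : ∀ N, Function.Surjective (gf N) := fun N => (hseq N).2.1
  have hexact0 : ∀ N, Function.Exact (ff N) (gf N) := fun N => (hseq N).2.2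
  have main : ∀ M ∈ ℬ, IsGorenstein 𝒜 ℬ M := by
    intro M hM
    refine ⟨fun i hi L hL => hher i hi L hL.1 M hM, ?_⟩
    have hMB : ∀ n, MseqAux M Kf n ∈ ℬ := by
      intro n; induction n with
      | zero => exact hM
      | succ n ih => exact hKB (MseqAux M Kf n)
    have hXB : ∀ n, Af (MseqAux M Kf n) ∈ ℬ := by
      intro n
      rw [hcp.mem_right]
      intro L hLA
      exact ext1_extension (hinj0 (MseqAux M Kf n)) (hsurj0 (MseqAux M Kf n)) (hexact0 (MseqAux M Kf n))
        ((hcp.mem_right _).mp (hMB (n+1)) L hLA) ((hcp.mem_right _).mp (hMB n) L hLA)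
    refine ⟨fun n => Af (MseqAux M Kf n),
      fun n => (ff (MseqAux M Kf n)).comp (gf (MseqAux M Kf (n+1))), gf (MseqAux M Kf 0),
      fun n => ⟨hAmem (MseqAux M Kf n), hXB n⟩, hsurj0 (MseqAux M Kf 0), ?_, ?_, ?_⟩
    · -- Exact (d 0) ε
      intro y
      constructor
      · intro h0
        obtain ⟨k, hk⟩ := (hexact0 (MseqAux M Kf 0) y).mp h0
        obtain ⟨z, hz⟩ := hsurj0 (MseqAux M Kf 1) k
        refine ⟨z, ?_⟩
        show ff (MseqAux M Kf 0) (gf (MseqAux M Kf 1) z) = y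
        rw [hz, hk]
      · rintro ⟨z, rfl⟩
        exact (hexact0 (MseqAux M Kf 0)).apply_apply_eq_zero (gf (MseqAux M Kf 1) z)
    · -- Exact (d (n+1)) (d n)
      intro n y
      constructor
      · intro h0
        have hg : gf (MseqAux M Kf (n+1)) y = 0 :=
          hinj0 (MseqAux M Kf n) (h0.trans (map_zero (ff (MseqAux M Kf n))).symm)
        obtain ⟨k, hk⟩ := (hexact0 (MseqAux M Kf (n+1)) y).mp hg
        obtain ⟨z, hz⟩ := hsurj0 (MseqAux M Kf (n+2)) k
        refine ⟨z, ?_⟩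
        show ff (MseqAux M Kf (n+1)) (gf (MseqAux M Kf (n+2)) z) = y
        rw [hz, hk]
      · rintro ⟨z, rfl⟩
        exact (congrArg (ff (MseqAux M Kf n))
          ((hexact0 (MseqAux M Kf (n+1))).apply_apply_eq_zero (gf (MseqAux M Kf (n+2)) z))).trans
          (map_zero (ff (MseqAux M Kf n)))
    · -- Hom(L, -) exactness
      intro L hL
      have hExtM : ∀ n, ExtVanishes R 1 L (MseqAux M Kf n) := fun n =>
        (hcp.mem_left L).mp hL.1 _ (hMB n)
      refine ⟨?_, ?_, ?_⟩
      · intro φ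
        obtain ⟨ψ, hψ⟩ := ext_lift (hinj0 (MseqAux M Kf 0)) (hsurj0 (MseqAux M Kf 0)) (hexact0 (MseqAux M Kf 0))
          (hExtM 1) φ
        exact ⟨ψ, hψ⟩
      · intro h
        constructor
        · intro h0
          have hmem : ∀ l, ∃ k, ff (MseqAux M Kf 0) k = h l := by
            intro l
            refine (hexact0 (MseqAux M Kf 0) (h l)).mp ?_
            exact LinearMap.congr_fun h0 l
          obtain ⟨h', hh'⟩ := factor_through_injective (ff (MseqAux M Kf 0)) (hinj0 (MseqAux M Kf 0)) h hmem
          obtain ⟨ψ, hψ⟩ := ext_lift (hinj0 (MseqAux M Kf 1)) (hsurj0 (MseqAux M Kf 1)) (hexact0 (MseqAux M Kf 1))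
            (hExtM 2) h'
          refine ⟨ψ, ?_⟩
          show ((ff (MseqAux M Kf 0)).comp (gf (MseqAux M Kf 1))).comp ψ = h
          exact (LinearMap.comp_assoc _ _ _).trans ((congrArg (ff (MseqAux M Kf 0)).comp hψ).trans hh')
        · rintro ⟨k, rfl⟩
          apply LinearMap.ext; intro l
          exact (hexact0 (MseqAux M Kf 0)).apply_apply_eq_zero (gf (MseqAux M Kf 1) (k l))
      · intro n h
        constructor
        · intro h0
          have hmem : ∀ l, ∃ k, ff (MseqAux M Kf (n+1)) k = h l := by
            intro l
            refine (hexact0 (MseqAux M Kf (n+1)) (h l)).mp ?_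
            exact hinj0 (MseqAux M Kf n)
              ((LinearMap.congr_fun h0 l).trans (map_zero (ff (MseqAux M Kf n))).symm)
          obtain ⟨h', hh'⟩ := factor_through_injective (ff (MseqAux M Kf (n+1)))
            (hinj0 (MseqAux M Kf (n+1))) h hmem
          obtain ⟨ψ, hψ⟩ := ext_lift (hinj0 (MseqAux M Kf (n+2))) (hsurj0 (MseqAux M Kf (n+2)))
            (hexact0 (MseqAux M Kf (n+2))) (hExtM (n+3)) h'
          refine ⟨ψ, ?_⟩
          show ((ff (MseqAux M Kf (n+1))).comp (gf (MseqAux M Kf (n+2)))).comp ψ = h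
          exact (LinearMap.comp_assoc _ _ _).trans ((congrArg (ff (MseqAux M Kf (n+1))).comp hψ).trans hh')
        · rintro ⟨k, rfl⟩
          apply LinearMap.ext; intro l
          exact (congrArg (ff (MseqAux M Kf n))
            ((hexact0 (MseqAux M Kf (n+1))).apply_apply_eq_zero (gf (MseqAux M Kf (n+2)) (k l)))).trans
            (map_zero (ff (MseqAux M Kf n)))
  refine ⟨main, fun M hMinj => main M ?_⟩
  rw [hcp.mem_right]
  intro L hLA
  exact extVanishes_of_injective hMinj 0
end
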